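/- arXiv:1103.5033 — 2 statements merged into one kernel-verified Lean document; each statement's English description precedes it below -/
import Mathlib

section
/- Under the log-exponential-power-law class conditions (h(y) = L(y)·y^ρ, ρ > 1, L twice differentiable, slowly varying, y·L'(y)/L(y) → 0, (y·L'(y)/L(y))' → 0, h strictly increasing to ∞ with h' > 0), let y†(n) solve h(y†(n)) = ln n, and define the critical moment q_c(n) = h'(y†(n)) − h''(y†(n))/h'(y†(n)) (i.e. the solution of y*(q_c) = y†(n)). Then the exact identity q_c(n)/ln n = ρ_l(y†(n))/y†(n) − h''(y†(n))/( h(y†(n))·h'(y†(n)) ) holds, where ρ_l(y) = y·h'(y)/h(y); moreover, with θ(n) = ln n / y†(n), the second term is asymptotically negligible, so that q_c(n) / ( ρ_l(y†(n))·θ(n) ) → 1 as n → ∞. -/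
/-!
With `ε = y L'/L` one has `h' = (ε + ρ) h / y` and `h'' = h / y² ((ε + ρ)² - (ε + ρ) + y ε')`,
hence `h'' / h'² = (1 - 1/(ε + ρ)) / h + (y / h) ε' / (ε + ρ)²`. Since `ε + ρ → ρ > 1`, `h`
eventually dominates `y ^ s` for some `s > 1`, so `1/h → 0` and `y/h → 0`; with `ε' → 0` the
ratio `h''/h'²` vanishes at infinity. As `ρ_l(y†) θ = h'(y†)`, `q_c / (ρ_l θ) = 1 - h''/h'²` at
`y†(n)`, and `y†(n) → ∞` because `h` is increasing.
-/
open Filter Real Topology Set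

/-- The local index `ρ_l(y) = y h'(y) / h(y)` of the paper. -/
noncomputable def elasticity (f : ℝ → ℝ) (y : ℝ) : ℝ := y * deriv f y / f y

lemma hasDerivAt_of_eq_mul_rpow {L h : ℝ → ℝ} {ρ y : ℝ} (hh : ∀ z > 0, h z = L z * z ^ ρ)
    (hy : 0 < y) (hL : DifferentiableAt ℝ L y) (hLy : L y ≠ 0) :
    HasDerivAt h ((elasticity L y + ρ) * h y / y) y := by
  have hev : (fun z => L z * z ^ ρ) =ᶠ[𝓝 y] h :=
    eventuallyEq_of_mem (Ioi_mem_nhds hy) fun z hz => (hh z hz).symm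
  refine ((hL.hasDerivAt.mul (hasDerivAt_rpow_const (Or.inl hy.ne'))).congr_of_eventuallyEq
      hev.symm).congr_deriv ?_
  rw [hh y hy, elasticity, rpow_sub hy, rpow_one]
  field_simp

lemma deriv_deriv_div_deriv_sq_eq {f g : ℝ → ℝ} {y : ℝ}
    (hf : ∀ᶠ z in 𝓝 y, HasDerivAt f (g z * f z / z) z) (hg : DifferentiableAt ℝ g y)
    (hy : y ≠ 0) (hfy : f y ≠ 0) (hgy : g y ≠ 0) :
    deriv (deriv f) y / deriv f y ^ 2 =
      (1 - (g y)⁻¹) / f y + y / f y * (deriv g y / g y ^ 2) := by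
  have hderiv : deriv f =ᶠ[𝓝 y] fun z => g z * f z / z := hf.mono fun z hz => hz.deriv
  have hf' : HasDerivAt f (g y * f y / y) y := hf.self_of_nhds
  have hquot : HasDerivAt (fun z => g z * f z / z)
      (((deriv g y * f y + g y * (g y * f y / y)) * y - g y * f y * 1) / y ^ 2) y :=
    (hg.hasDerivAt.mul hf').div (hasDerivAt_id' y) hy
  rw [hderiv.deriv_eq, hquot.deriv, hf'.deriv]
  field_simp
  ring

lemma tendsto_id_div_zero_of_tendsto_elasticity {f : ℝ → ℝ} {r : ℝ}
    (hf : ∀ᶠ y in atTop, 0 < f y ∧ DifferentiableAt ℝ f y)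
    (hel : Tendsto (elasticity f) atTop (𝓝 r)) (hr : 1 < r) :
    Tendsto (fun y => y / f y) atTop (𝓝 0) := by
  obtain ⟨s, hs1, hsr⟩ := exists_between hr
  obtain ⟨a, ha⟩ := eventually_atTop.1 <|
    (hf.and (hel.eventually (lt_mem_nhds hsr))).and (eventually_gt_atTop 0)
  -- `log f - s log` has derivative `(elasticity f - s) / y ≥ 0`, so `f` dominates `y ^ s`
  set ψ : ℝ → ℝ := fun y => log (f y) - s * log y
  have hψ : ∀ y ∈ Ici a, HasDerivAt ψ ((elasticity f y - s) / y) y := by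
    intro y hy
    obtain ⟨⟨⟨hfy, hdy⟩, -⟩, hy0⟩ := ha y hy
    refine ((hdy.hasDerivAt.log hfy.ne').sub ((hasDerivAt_log hy0.ne').const_mul s)).congr_deriv ?_
    rw [elasticity]
    field_simp
  have hmono : MonotoneOn ψ (Ici a) :=
    monotoneOn_of_hasDerivWithinAt_nonneg (convex_Ici a)
      (fun y hy => (hψ y hy).continuousAt.continuousWithinAt)
      (fun y hy => (hψ y (interior_subset hy)).hasDerivWithinAt)
      (fun y hy => by
        obtain ⟨⟨-, hs⟩, hy0⟩ := ha y (interior_subset hy)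
        exact div_nonneg (by linarith) hy0.le)
  have hlog : Tendsto (fun y => log (y / f y)) atTop atBot := by
    refine tendsto_atBot_mono' atTop ?_ <| tendsto_atBot_add_const_right atTop (-ψ a)
      (tendsto_log_atTop.const_mul_atTop_of_neg (by linarith : 1 - s < 0))
    filter_upwards [eventually_ge_atTop a] with y hy
    obtain ⟨⟨⟨hfy, -⟩, -⟩, hy0⟩ := ha y hy
    have := hmono self_mem_Ici hy hy
    rw [log_div hy0.ne' hfy.ne']
    linarith
  refine (tendsto_exp_atBot.comp hlog).congr' ?_
  filter_upwards [eventually_ge_atTop a] with y hy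
  obtain ⟨⟨⟨hfy, -⟩, -⟩, hy0⟩ := ha y hy
  exact exp_log (div_pos hy0 hfy)

/-- The critical moment `q_c` of the paper, as a function of `y = y†(n)`. -/
noncomputable def criticalMoment (h : ℝ → ℝ) (y : ℝ) : ℝ :=
  deriv h y - deriv (deriv h) y / deriv h y

lemma tendsto_criticalMoment_div_deriv {L h : ℝ → ℝ} {ρ : ℝ} (hρ : 1 < ρ)
    (hLpos : ∀ y > 0, 0 < L y) (hLdiff : ∀ y > 0, DifferentiableAt ℝ L y)
    (hLdiff2 : ∀ y > 0, DifferentiableAt ℝ (deriv L) y)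
    (hL1 : Tendsto (elasticity L) atTop (𝓝 0)) (hL2 : Tendsto (deriv (elasticity L)) atTop (𝓝 0))
    (hh : ∀ y > 0, h y = L y * y ^ ρ) :
    Tendsto (fun y => criticalMoment h y / deriv h y) atTop (𝓝 1) := by
  set g := fun y => elasticity L y + ρ
  have hpos : ∀ y > 0, 0 < h y := fun y hy =>
    hh y hy ▸ mul_pos (hLpos y hy) (rpow_pos_of_pos hy ρ)
  have hderiv : ∀ y > 0, HasDerivAt h (g y * h y / y) y := fun y hy =>
    hasDerivAt_of_eq_mul_rpow hh hy (hLdiff y hy) (hLpos y hy).ne'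
  have hg : Tendsto g atTop (𝓝 ρ) := by simpa using hL1.add_const ρ
  have hg' : deriv g = deriv (elasticity L) := funext fun y => deriv_add_const ρ
  have hyh : Tendsto (fun y => y / h y) atTop (𝓝 0) := by
    refine tendsto_id_div_zero_of_tendsto_elasticity ?_ (hg.congr' ?_) hρ <;>
      filter_upwards [eventually_gt_atTop 0] with y hy
    · exact ⟨hpos y hy, (hderiv y hy).differentiableAt⟩
    · rw [elasticity, (hderiv y hy).deriv]
      field_simp [(hpos y hy).ne']
  have hinv : Tendsto (fun y => (h y)⁻¹) atTop (𝓝 0) := by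
    refine (show Tendsto (fun y => y / h y * y⁻¹) atTop (𝓝 0) by
      simpa using hyh.mul tendsto_inv_atTop_zero).congr' ?_
    filter_upwards [eventually_gt_atTop 0] with y hy
    field_simp
  have hlim : Tendsto (fun y => 1 - ((1 - (g y)⁻¹) / h y + y / h y * (deriv g y / g y ^ 2)))
      atTop (𝓝 1) := by
    have hρ0 : ρ ≠ 0 := by positivity
    simpa [hg', div_eq_mul_inv] using tendsto_const_nhds.sub
      (((tendsto_const_nhds.sub (hg.inv₀ hρ0)).mul hinv).add
        (hyh.mul (hL2.div (hg.pow 2) (pow_ne_zero 2 hρ0))))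
  refine hlim.congr' ?_
  filter_upwards [eventually_gt_atTop 0, hg.eventually (lt_mem_nhds (by linarith : 0 < ρ))]
    with y hy hgy
  have hgd : DifferentiableAt ℝ g y :=
    ((differentiableAt_fun_id.mul (hLdiff2 y hy)).div (hLdiff y hy) (hLpos y hy).ne').add_const ρ
  have hh'y : deriv h y ≠ 0 := by
    rw [(hderiv y hy).deriv]
    exact div_ne_zero (mul_pos hgy (hpos y hy)).ne' hy.ne'
  rw [eq_comm, criticalMoment, sub_div, div_self hh'y, div_div, ← sq, deriv_deriv_div_deriv_sq_eq
    (eventually_of_mem (Ioi_mem_nhds hy) hderiv) hgd hy.ne' (hpos y hy).ne' hgy.ne']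

lemma tendsto_atTop_of_monotoneOn_comp {α : Type*} {l : Filter α} {f : ℝ → ℝ} {x : α → ℝ}
    {a : ℝ} (hf : MonotoneOn f (Ioi a)) (hx : ∀ᶠ n in l, a < x n) (hfx : Tendsto (f ∘ x) l atTop) :
    Tendsto x l atTop := by
  refine tendsto_atTop.2 fun b => ?_
  have hc : a < max b (a + 1) := lt_max_of_lt_right (lt_add_one a)
  filter_upwards [hx, hfx.eventually_gt_atTop (f (max b (a + 1)))] with n hxn hfxn
  refine (le_max_left b (a + 1)).trans (le_of_lt ?_)
  by_contra! hle
  exact (hf hxn hc hle).not_gt hfxn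

theorem stmt9_general (ρ : ℝ) (hρ : 1 < ρ) (L : ℝ → ℝ)
    (hLpos : ∀ y > (0:ℝ), 0 < L y)
    (hLdiff : ∀ y > (0:ℝ), DifferentiableAt ℝ L y)
    (hLdiff2 : ∀ y > (0:ℝ), DifferentiableAt ℝ (deriv L) y)
    (hL1 : Tendsto (fun y => y * deriv L y / L y) atTop (nhds 0))
    (hL2 : Tendsto (deriv fun y => y * deriv L y / L y) atTop (nhds 0))
    (h : ℝ → ℝ) (hh : ∀ y > (0:ℝ), h y = L y * y ^ ρ)
    (hmono : StrictMonoOn h (Set.Ioi 0))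
    (ydag : ℕ → ℝ) (hydag_pos : ∀ n ≥ 2, 0 < ydag n)
    (hydag : ∀ n ≥ 2, h (ydag n) = Real.log n)
    (θ : ℕ → ℝ) (hθ : ∀ n ≥ 2, θ n = Real.log n / ydag n)
    (ρl : ℝ → ℝ) (hρl : ∀ y > (0:ℝ), ρl y = y * deriv h y / h y)
    (qc : ℕ → ℝ)
    (hqc : ∀ n ≥ 2, qc n =
      deriv h (ydag n) - deriv (deriv h) (ydag n) / deriv h (ydag n)) :
    (∀ n ≥ 2, qc n / Real.log n =
        ρl (ydag n) / ydag n -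
          deriv (deriv h) (ydag n) / (h (ydag n) * deriv h (ydag n))) ∧
      Tendsto (fun n => qc n / (ρl (ydag n) * θ n)) atTop (nhds 1) := by
  refine ⟨fun n hn => ?_, ?_⟩
  · rw [hqc n hn, hρl _ (hydag_pos n hn), ← hydag n hn, mul_div_assoc,
      mul_div_cancel_left₀ _ (hydag_pos n hn).ne']
    ring
  have hydag_top : Tendsto ydag atTop atTop := by
    refine tendsto_atTop_of_monotoneOn_comp hmono.monotoneOn
      ((eventually_ge_atTop 2).mono hydag_pos) ?_
    refine (tendsto_log_atTop.comp tendsto_natCast_atTop_atTop).congr' ?_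
    filter_upwards [eventually_ge_atTop 2] with n hn
    exact (hydag n hn).symm
  refine ((tendsto_criticalMoment_div_deriv hρ hLpos hLdiff hLdiff2 hL1 hL2 hh).comp
    hydag_top).congr' ?_
  filter_upwards [eventually_ge_atTop 2] with n hn
  have hy := hydag_pos n hn
  have hhy : h (ydag n) ≠ 0 := by
    rw [hh _ hy]
    exact (mul_pos (hLpos _ hy) (rpow_pos_of_pos hy ρ)).ne'
  rw [Function.comp_apply, hqc n hn, hρl _ hy, hθ n hn, ← hydag n hn, criticalMoment]
  field_simp [hy.ne']

/-- The critical moment `q_c(n) = h'(y†) - h''(y†)/h'(y†)`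
satisfies the exact identity
`q_c(n)/ln n = ρ_l(y†(n))/y†(n) - h''(y†(n))/(h(y†(n)) h'(y†(n)))` and,
with `θ(n) = ln n / y†(n)`, the approximation `q_c(n) ≃ ρ_l(y†(n)) θ(n)` holds
in the sense that the ratio tends to `1`. -/
theorem stmt9 (ρ : ℝ) (hρ : 1 < ρ) (L : ℝ → ℝ)
    (hLpos : ∀ y > (0:ℝ), 0 < L y)
    (hLdiff : ∀ y > (0:ℝ), DifferentiableAt ℝ L y)
    (hLdiff2 : ∀ y > (0:ℝ), DifferentiableAt ℝ (deriv L) y)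
    (hSV : ∀ t > (0:ℝ), Tendsto (fun y => L (t * y) / L y) atTop (nhds 1))
    (hL1 : Tendsto (fun y => y * deriv L y / L y) atTop (nhds 0))
    (hL2 : Tendsto (deriv fun y => y * deriv L y / L y) atTop (nhds 0))
    (h : ℝ → ℝ) (hh : ∀ y > (0:ℝ), h y = L y * y ^ ρ)
    (hmono : StrictMonoOn h (Set.Ioi 0)) (htop : Tendsto h atTop atTop)
    (hh' : ∀ y > (0:ℝ), 0 < deriv h y)
    (ydag : ℕ → ℝ) (hydag_pos : ∀ n ≥ 2, 0 < ydag n)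
    (hydag : ∀ n ≥ 2, h (ydag n) = Real.log n)
    (θ : ℕ → ℝ) (hθ : ∀ n ≥ 2, θ n = Real.log n / ydag n)
    (ρl : ℝ → ℝ) (hρl : ∀ y > (0:ℝ), ρl y = y * deriv h y / h y)
    (qc : ℕ → ℝ)
    (hqc : ∀ n ≥ 2, qc n =
      deriv h (ydag n) - deriv (deriv h) (ydag n) / deriv h (ydag n)) :
    (∀ n ≥ 2, qc n / Real.log n =
        ρl (ydag n) / ydag n -
          deriv (deriv h) (ydag n) / (h (ydag n) * deriv h (ydag n))) ∧
      Tendsto (fun n => qc n / (ρl (ydag n) * θ n)) atTop (nhds 1) :=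
  stmt9_general ρ hρ L hLpos hLdiff hLdiff2 hL1 hL2 h hh hmono ydag hydag_pos hydag θ hθ ρl hρl qc
    hqc
end

section
/- Under the log-exponential-power-law class conditions (h(y) = L(y)·y^ρ, ρ > 1, L twice differentiable, slowly varying, y·L'(y)/L(y) → 0, (y·L'(y)/L(y))' → 0, h strictly increasing to ∞ with h' > 0), let ψ(y) = h(y) − ln h'(y) and for each large q let y*(q) solve ψ'(y*) = q, i.e. q = h'(y*) − h''(y*)/h'(y*). Then h'(y*(q))/q → 1 as q → ∞. -/
open Filter Real

/-!
Write `h' = h · u / y` with `u = y h' / h = ρ + y L'/L` the elasticity of `h`. Then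
`h'' / h'² = (y / h) · ((u - 1) / (u y) + u' / u²)`. Since `u → ρ > 1`, `log (h / y)` grows at
least like `((ρ - 1) / 2) · log y`, so `y / h → 0`; with `u' → 0` this gives `h'' / h'² → 0`.
Finally `q = h'(y*) (1 - h''(y*) / h'(y*)²)`, so `h'(y*) / q → 1`.
-/

theorem tendsto_atTop_of_hasDerivAt_ge_div {g g' : ℝ → ℝ} {a : ℝ} (ha : 0 < a)
    (hg : ∀ᶠ y in atTop, HasDerivAt g (g' y) y ∧ a / y ≤ g' y) :
    Tendsto g atTop atTop := by
  obtain ⟨Y, hY⟩ := (hg.and (eventually_gt_atTop 0)).exists_forall_of_atTop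
  have hmono : MonotoneOn (fun y => g y - a * log y) (Set.Ici Y) := by
    have hderiv : ∀ y ∈ Set.Ici Y, HasDerivAt (fun y => g y - a * log y) (g' y - a * y⁻¹) y :=
      fun y hy => (hY y hy).1.1.sub ((hasDerivAt_log (hY y hy).2.ne').const_mul a)
    refine monotoneOn_of_hasDerivWithinAt_nonneg (convex_Ici Y)
      (fun y hy => (hderiv y hy).continuousAt.continuousWithinAt)
      (fun y hy => (hderiv y (interior_subset hy)).hasDerivWithinAt) fun y hy => ?_
    have := (hY y (interior_subset hy)).1.2
    rw [div_eq_mul_inv] at this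
    linarith
  refine tendsto_atTop_mono' atTop ?_
    (tendsto_atTop_add_const_left _ (g Y - a * log Y)
      ((tendsto_const_mul_atTop_of_pos ha).mpr tendsto_log_atTop))
  filter_upwards [eventually_ge_atTop Y] with y hy
  have : g Y - a * log Y ≤ g y - a * log y := hmono Set.self_mem_Ici hy hy
  linarith

section Elasticity

variable {h u : ℝ → ℝ} {ρ : ℝ}

theorem tendsto_div_self_atTop_of_elasticity (hρ : 1 < ρ) (hpos : ∀ᶠ y in atTop, 0 < h y)
    (hderiv : ∀ᶠ y in atTop, HasDerivAt h (h y * u y / y) y)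
    (hu : Tendsto u atTop (nhds ρ)) :
    Tendsto (fun y => h y / y) atTop atTop := by
  have hgap : ∀ᶠ y in atTop, (ρ - 1) / 2 ≤ u y - 1 :=
    (hu.eventually (eventually_ge_nhds (show (ρ + 1) / 2 < ρ by linarith))).mono
      fun y hy => by linarith
  have hlog : Tendsto (fun y => log (h y) - log y) atTop atTop := by
    refine tendsto_atTop_of_hasDerivAt_ge_div (g' := fun y => (u y - 1) / y)
      (by linarith : 0 < (ρ - 1) / 2) ?_
    filter_upwards [hpos, hderiv, hgap, eventually_gt_atTop 0] with y hhy hdy hgy hy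
    refine ⟨((hdy.log hhy.ne').sub (hasDerivAt_log hy.ne')).congr_deriv ?_,
      div_le_div_of_nonneg_right hgy hy.le⟩
    field_simp
  refine (tendsto_exp_atTop.comp hlog).congr' ?_
  filter_upwards [hpos, eventually_gt_atTop 0] with y hhy hy
  simp only [Function.comp, ← log_div hhy.ne' hy.ne', exp_log (div_pos hhy hy)]

theorem hasDerivAt_deriv_of_elasticity {y u' : ℝ} (hy : y ≠ 0)
    (hderiv : ∀ᶠ z in nhds y, HasDerivAt h (h z * u z / z) z) (hu : HasDerivAt u u' y) :
    HasDerivAt (deriv h) (h y * (u y ^ 2 - u y) / y ^ 2 + h y * u' / y) y := by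
  have hquot := ((hderiv.self_of_nhds.mul hu).div (hasDerivAt_id y) hy)
  refine (hquot.congr_of_eventuallyEq (hderiv.mono fun z hz => hz.deriv)).congr_deriv ?_
  simp only [id, Pi.mul_apply]
  field_simp
  ring

theorem tendsto_deriv_deriv_div_sq_of_elasticity {u' : ℝ → ℝ} (hρ : 1 < ρ)
    (hpos : ∀ᶠ y in atTop, 0 < h y) (hderiv : ∀ᶠ y in atTop, HasDerivAt h (h y * u y / y) y)
    (hu_deriv : ∀ᶠ y in atTop, HasDerivAt u (u' y) y)
    (hu : Tendsto u atTop (nhds ρ)) (hu' : Tendsto u' atTop (nhds 0)) :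
    Tendsto (fun y => deriv (deriv h) y / deriv h y ^ 2) atTop (nhds 0) := by
  have hyh : Tendsto (fun y => y / h y) atTop (nhds 0) :=
    (tendsto_inv_atTop_zero.comp (tendsto_div_self_atTop_of_elasticity hρ hpos hderiv hu)).congr
      fun y => inv_div _ _
  have hbracket : Tendsto (fun y => (u y - 1) / u y / y + u' y / u y ^ 2) atTop (nhds 0) := by
    have hρ0 : ρ ≠ 0 := by linarith
    simpa using (((hu.sub_const 1).div hu hρ0).div_atTop tendsto_id).add
      (hu'.div (hu.pow 2) (pow_ne_zero 2 hρ0))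
  have hlim : Tendsto (fun y => y / h y * ((u y - 1) / u y / y + u' y / u y ^ 2)) atTop
      (nhds 0) := by simpa using hyh.mul hbracket
  refine hlim.congr' ?_
  obtain ⟨Y, hY⟩ := (hderiv.and (eventually_gt_atTop 0)).exists_forall_of_atTop
  filter_upwards [hpos, hu_deriv, hu.eventually (eventually_ne_nhds (by linarith : ρ ≠ 0)),
    eventually_gt_atTop Y] with y hhy hdu huy hy
  have hnhds : ∀ᶠ z in nhds y, HasDerivAt h (h z * u z / z) z :=
    (eventually_gt_nhds hy).mono fun z hz => (hY z hz.le).1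
  have hy0 : y ≠ 0 := (hY y hy.le).2.ne'
  rw [(hasDerivAt_deriv_of_elasticity hy0 hnhds hdu).deriv, hnhds.self_of_nhds.deriv]
  field_simp

end Elasticity

theorem hasDerivAt_mul_rpow {L : ℝ → ℝ} {ρ y : ℝ} (hy : y ≠ 0) (hL : L y ≠ 0)
    (hLd : DifferentiableAt ℝ L y) :
    HasDerivAt (fun z => L z * z ^ ρ) (L y * y ^ ρ * (ρ + y * deriv L y / L y) / y) y := by
  refine (hLd.hasDerivAt.mul (hasDerivAt_rpow_const (Or.inl hy))).congr_deriv ?_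
  rw [rpow_sub_one hy]
  field_simp
  ring

theorem tendsto_div_of_eq_sub_div {α : Type*} {l : Filter α} {f a b : α → ℝ}
    (hr : Tendsto (fun x => b x / a x ^ 2) l (nhds 0)) (hf0 : ∀ᶠ x in l, f x ≠ 0)
    (hf : ∀ᶠ x in l, f x = a x - b x / a x) :
    Tendsto (fun x => a x / f x) l (nhds 1) := by
  have hlim : Tendsto (fun x => (1 - b x / a x ^ 2)⁻¹) l (nhds 1) := by
    simpa using (tendsto_const_nhds.sub hr).inv₀ (by norm_num : (1 : ℝ) - 0 ≠ 0)
  refine hlim.congr' ?_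
  filter_upwards [hf0, hf] with x hx0 hx
  -- for `a x = 0` the right side of `hx` is the junk value `0 - b x / 0 = 0`
  have ha : a x ≠ 0 := fun ha => hx0 (by simp [hx, ha])
  rw [hx]
  field_simp

theorem stmt11_general (ρ : ℝ) (hρ : 1 < ρ) (L : ℝ → ℝ)
    (hLpos : ∀ y > (0:ℝ), 0 < L y)
    (hLdiff : ∀ y > (0:ℝ), DifferentiableAt ℝ L y)
    (hLdiff2 : ∀ y > (0:ℝ), DifferentiableAt ℝ (deriv L) y)
    (hL1 : Tendsto (fun y => y * deriv L y / L y) atTop (nhds 0))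
    (hL2 : Tendsto (deriv fun y => y * deriv L y / L y) atTop (nhds 0))
    (h : ℝ → ℝ) (hh : ∀ y > (0:ℝ), h y = L y * y ^ ρ)
    (ystar : ℝ → ℝ)
    (hystar : ∀ᶠ q in atTop,
      q = deriv h (ystar q) - deriv (deriv h) (ystar q) / deriv h (ystar q))
    (hystar_top : Tendsto ystar atTop atTop) :
    Tendsto (fun q => deriv h (ystar q) / q) atTop (nhds 1) := by
  set E : ℝ → ℝ := fun y => y * deriv L y / L y
  have hpos : ∀ᶠ y in atTop, 0 < h y := by
    filter_upwards [eventually_gt_atTop 0] with y hy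
    rw [hh y hy]
    exact mul_pos (hLpos y hy) (rpow_pos_of_pos hy ρ)
  have hderiv : ∀ᶠ y in atTop, HasDerivAt h (h y * (ρ + E y) / y) y := by
    filter_upwards [eventually_gt_atTop 0] with y hy
    rw [hh y hy]
    exact (hasDerivAt_mul_rpow hy.ne' (hLpos y hy).ne' (hLdiff y hy)).congr_of_eventuallyEq
      ((eventually_gt_nhds hy).mono hh)
  have hE_deriv : ∀ᶠ y in atTop, HasDerivAt (fun z => ρ + E z) (deriv E y) y := by
    filter_upwards [eventually_gt_atTop 0] with y hy
    exact ((differentiableAt_id.mul (hLdiff2 y hy)).div (hLdiff y hy)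
      (hLpos y hy).ne').hasDerivAt.const_add ρ
  have hratio := tendsto_deriv_deriv_div_sq_of_elasticity hρ hpos hderiv hE_deriv
    (by simpa using hL1.const_add ρ) hL2
  exact tendsto_div_of_eq_sub_div (hratio.comp hystar_top) (eventually_ne_atTop 0) hystar

/-- With `ψ(y) = h(y) - ln h'(y)` and `y*(q)` the solution of
`ψ'(y*) = q` (i.e. `q = h'(y*) - h''(y*)/h'(y*)`), one has
`h'(y*(q)) / q → 1` as `q → ∞`. -/
theorem stmt11 (ρ : ℝ) (hρ : 1 < ρ) (L : ℝ → ℝ)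
    (hLpos : ∀ y > (0:ℝ), 0 < L y)
    (hLdiff : ∀ y > (0:ℝ), DifferentiableAt ℝ L y)
    (hLdiff2 : ∀ y > (0:ℝ), DifferentiableAt ℝ (deriv L) y)
    (hSV : ∀ t > (0:ℝ), Tendsto (fun y => L (t * y) / L y) atTop (nhds 1))
    (hL1 : Tendsto (fun y => y * deriv L y / L y) atTop (nhds 0))
    (hL2 : Tendsto (deriv fun y => y * deriv L y / L y) atTop (nhds 0))
    (h : ℝ → ℝ) (hh : ∀ y > (0:ℝ), h y = L y * y ^ ρ)
    (hmono : StrictMonoOn h (Set.Ioi 0)) (htop : Tendsto h atTop atTop)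
    (hh' : ∀ y > (0:ℝ), 0 < deriv h y)
    (ψ : ℝ → ℝ) (hψ : ∀ y > (0:ℝ), ψ y = h y - Real.log (deriv h y))
    (ystar : ℝ → ℝ) (hystar_pos : ∀ᶠ q in atTop, 0 < ystar q)
    (hystar : ∀ᶠ q in atTop,
      q = deriv h (ystar q) - deriv (deriv h) (ystar q) / deriv h (ystar q))
    (hystar_uniq : ∀ᶠ q in atTop, ∀ y > (0:ℝ),
      q = deriv h y - deriv (deriv h) y / deriv h y → y = ystar q)
    (hystar_top : Tendsto ystar atTop atTop) :
    Tendsto (fun q => deriv h (ystar q) / q) atTop (nhds 1) :=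
  stmt11_general ρ hρ L hLpos hLdiff hLdiff2 hL1 hL2 h hh ystar hystar hystar_top
end
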